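/- arXiv:2505.05082 — 4 statements merged into one kernel-verified Lean document; each statement's English description precedes it below -/
import Mathlib

section
/- (Turing–Good–Robbins formula) Let X be a nonnegative random variable and, conditionally on X = x, let Z be Poisson with mean γ·x for a fixed γ > 0. Then for every integer z ≥ 0 with P(Z = z) > 0: E[X | Z = z] = (1/γ) · (z+1) · P(Z = z+1) / P(Z = z). -/
open MeasureTheory

/-- Turing–Good–Robbins formula. Let `X ≥ 0` be integrable and, given `X = x`, let `Z` be
Poisson with mean `γx`, encoded by: `P(Z = z) = E[e^{−γX}(γX)^z/z!]` and
`E[X·1_{Z=z}] = E[X·e^{−γX}(γX)^z/z!]`. Then for every `z ∈ ℕ` with `P(Z = z) > 0`,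
`E[X | Z = z] = (1/γ)·(z+1)·P(Z = z+1)/P(Z = z)`. -/
theorem stmt_9 {Ω : Type*} [MeasurableSpace Ω] (μ : Measure Ω) [IsProbabilityMeasure μ]
    (X : Ω → ℝ) (Z : Ω → ℕ) (hXm : Measurable X) (hZm : Measurable Z)
    (hXnn : ∀ ω, 0 ≤ X ω) (hXint : Integrable X μ) (γ : ℝ) (hγ : 0 < γ)
    (hZ : ∀ z : ℕ, (μ {ω | Z ω = z}).toReal
        = ∫ ω, Real.exp (-(γ * X ω)) * (γ * X ω) ^ z / (Nat.factorial z) ∂μ)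
    (hXZ : ∀ z : ℕ, (∫ ω in {ω | Z ω = z}, X ω ∂μ)
        = ∫ ω, X ω * (Real.exp (-(γ * X ω)) * (γ * X ω) ^ z / (Nat.factorial z)) ∂μ)
    (z : ℕ) (hz : 0 < (μ {ω | Z ω = z}).toReal) :
    (∫ ω in {ω | Z ω = z}, X ω ∂μ) / (μ {ω | Z ω = z}).toReal
      = (1 / γ) * ((z + 1 : ℝ) * (μ {ω | Z ω = z + 1}).toReal / (μ {ω | Z ω = z}).toReal) := by
  have hptwise : ∀ ω, X ω * (Real.exp (-(γ * X ω)) * (γ * X ω) ^ z / (Nat.factorial z))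
      = (1 / γ * (z + 1)) *
        (Real.exp (-(γ * X ω)) * (γ * X ω) ^ (z + 1) / (Nat.factorial (z + 1))) := by
    intro ω
    have hfz : (Nat.factorial z : ℝ) ≠ 0 := Nat.cast_ne_zero.mpr (Nat.factorial_ne_zero z)
    have hfz1 : (Nat.factorial (z + 1) : ℝ) = (z + 1) * Nat.factorial z := by
      push_cast [Nat.factorial_succ]; ring
    rw [hfz1, pow_succ]
    field_simp
  have key : (∫ ω in {ω | Z ω = z}, X ω ∂μ)
      = 1 / γ * (z + 1) * (μ {ω | Z ω = z + 1}).toReal := by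
    rw [hXZ z, hZ (z + 1)]
    rw [show (fun ω => X ω * (Real.exp (-(γ * X ω)) * (γ * X ω) ^ z / (Nat.factorial z)))
        = fun ω => (1 / γ * (z + 1)) *
          (Real.exp (-(γ * X ω)) * (γ * X ω) ^ (z + 1) / (Nat.factorial (z + 1)))
      from funext hptwise]
    rw [MeasureTheory.integral_const_mul]
  rw [key]
  push_cast
  ring
end

section
/- Under the Poisson channel Z | X ∼ Poisson(γX), conditional moments factor into products of consecutive conditional means: for every positive integer k and nonnegative integer z (with relevant probabilities positive), E[(γX)^k | Z = z] = ∏_{i=0}^{k−1} E[γX | Z = z+i]. -/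
open MeasureTheory

/-! Writing `m n := E[e^{−γX}(γX)^n]`, the numerator of `E[(γX)^k | Z = z]` is `m (z + k)` and
the conditional mean `E[γX | Z = z + i]` is `m (z + i + 1) / m (z + i)`, so the product
telescopes to `m (z + k) / m z`. -/

theorem Finset.prod_range_div_of_ne_zero {G : Type*} [CommGroupWithZero G] (f : ℕ → G) (n : ℕ)
    (hf : ∀ i ≤ n, f i ≠ 0) : ∏ i ∈ Finset.range n, f (i + 1) / f i = f n / f 0 := by
  induction n with
  | zero => simp [div_self (hf 0 le_rfl)]
  | succ n ih =>
    rw [Finset.prod_range_succ, ih fun i hi => hf i (by omega), mul_comm,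
      div_mul_div_cancel₀ (hf n (by omega))]

theorem integral_pow_mul_exp_neg_mul_pow {Ω : Type*} [MeasurableSpace Ω] (μ : Measure Ω)
    (Y : Ω → ℝ) (m n : ℕ) :
    ∫ ω, Y ω ^ m * (Real.exp (-Y ω) * Y ω ^ n) ∂μ = ∫ ω, Real.exp (-Y ω) * Y ω ^ (n + m) ∂μ := by
  congr 1 with ω
  ring

theorem stmt_11_general {Ω : Type*} [MeasurableSpace Ω] (μ : Measure Ω)
    (X : Ω → ℝ) (γ : ℝ) (k : ℕ) (z : ℕ)
    (hpos : ∀ i : ℕ, 0 < ∫ ω, Real.exp (-(γ * X ω)) * (γ * X ω) ^ (z + i) ∂μ) :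
    (∫ ω, (γ * X ω) ^ k * (Real.exp (-(γ * X ω)) * (γ * X ω) ^ z) ∂μ)
        / (∫ ω, Real.exp (-(γ * X ω)) * (γ * X ω) ^ z ∂μ)
      = ∏ i ∈ Finset.range k,
          (∫ ω, (γ * X ω) * (Real.exp (-(γ * X ω)) * (γ * X ω) ^ (z + i)) ∂μ)
            / (∫ ω, Real.exp (-(γ * X ω)) * (γ * X ω) ^ (z + i) ∂μ) := by
  have hmean (n : ℕ) : ∫ ω, (γ * X ω) * (Real.exp (-(γ * X ω)) * (γ * X ω) ^ n) ∂μ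
      = ∫ ω, Real.exp (-(γ * X ω)) * (γ * X ω) ^ (n + 1) ∂μ := by
    simpa using integral_pow_mul_exp_neg_mul_pow μ (fun ω => γ * X ω) 1 n
  simp only [hmean, integral_pow_mul_exp_neg_mul_pow μ (fun ω => γ * X ω) k z]
  exact (Finset.prod_range_div_of_ne_zero
    (fun i => ∫ ω, Real.exp (-(γ * X ω)) * (γ * X ω) ^ (z + i) ∂μ) k
    fun i _ => (hpos i).ne').symm

/-- Under the Poisson channel `Z | X ∼ Poisson(γX)`, with conditional expectations defined by
`E[f(X) | Z = z] = E[f(X)·e^{−γX}(γX)^z] / E[e^{−γX}(γX)^z]`, the conditional moments factor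
into products of consecutive conditional means: for every `k ≥ 1` and `z ≥ 0`,
`E[(γX)^k | Z = z] = ∏_{i=0}^{k−1} E[γX | Z = z+i]`, provided the relevant denominators
are positive. -/
theorem stmt_11 {Ω : Type*} [MeasurableSpace Ω] (μ : Measure Ω) [IsProbabilityMeasure μ]
    (X : Ω → ℝ) (hXm : Measurable X) (hXnn : ∀ ω, 0 ≤ X ω)
    (γ : ℝ) (hγ : 0 < γ) (k : ℕ) (hk : 1 ≤ k)
    (hXk : Integrable (fun ω => X ω ^ k) μ) (z : ℕ)
    (hpos : ∀ i : ℕ, 0 < ∫ ω, Real.exp (-(γ * X ω)) * (γ * X ω) ^ (z + i) ∂μ) :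
    (∫ ω, (γ * X ω) ^ k * (Real.exp (-(γ * X ω)) * (γ * X ω) ^ z) ∂μ)
        / (∫ ω, Real.exp (-(γ * X ω)) * (γ * X ω) ^ z ∂μ)
      = ∏ i ∈ Finset.range k,
          (∫ ω, (γ * X ω) * (Real.exp (-(γ * X ω)) * (γ * X ω) ^ (z + i)) ∂μ)
            / (∫ ω, Real.exp (-(γ * X ω)) * (γ * X ω) ^ (z + i) ∂μ) :=
  stmt_11_general μ X γ k z hpos
end

section
/- (Monotonicity of the conditional mean in the observation) Let X ≥ 0 be non-degenerate with Z | X ∼ Poisson(γX) for fixed γ > 0. Then the map z ↦ E[X | Z = z] is increasing in z, i.e., for every z ≥ 1 with P(Z = z−1), P(Z = z) > 0: E[X | Z = z] ≥ E[X | Z = z−1]. The key step is the log-convexity inequality P(Z = z)² ≤ ((z+1)/z)·P(Z = z+1)·P(Z = z−1), which follows from Cauchy–Schwarz applied to U = γX. -/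
/-!
The Poisson mixture `P z = E[U^z e^{-U}] / z!` with `U = γX ≥ 0` is, up to the factorials, a
moment sequence `I z = E[U^z e^{-U}]`, and Cauchy–Schwarz for the weight `U^(z-1) e^{-U}` gives
`I z ^ 2 ≤ I (z-1) * I (z+1)`. Dividing by factorials turns this into the log-convexity
`P z ^ 2 ≤ ((z+1)/z) P(z+1) P(z-1)`, which is exactly the monotonicity of the Turing–Good–Robbins
ratio `(z+1) P(z+1) / P z = E[γX | Z = z]`.
-/

open MeasureTheory

section WeightedCauchySchwarz

variable {Ω : Type*} [MeasurableSpace Ω] {μ : Measure Ω}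

theorem sq_integral_mul_le_integral_mul_integral_mul_sq {w V : Ω → ℝ} (hw : 0 ≤ᵐ[μ] w)
    (hw_int : Integrable w μ) (hwV : Integrable (fun ω => w ω * V ω) μ)
    (hwV2 : Integrable (fun ω => w ω * V ω ^ 2) μ) :
    (∫ ω, w ω * V ω ∂μ) ^ 2 ≤ (∫ ω, w ω ∂μ) * ∫ ω, w ω * V ω ^ 2 ∂μ := by
  have hquad : ∀ t : ℝ, 0 ≤ (∫ ω, w ω ∂μ) * (t * t) + (2 * ∫ ω, w ω * V ω ∂μ) * t
      + ∫ ω, w ω * V ω ^ 2 ∂μ := by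
    intro t
    have hexpand : (fun ω => w ω * (t + V ω) ^ 2)
        = fun ω => t ^ 2 * w ω + 2 * t * (w ω * V ω) + w ω * V ω ^ 2 := by
      ext ω; ring
    have hnonneg : 0 ≤ ∫ ω, w ω * (t + V ω) ^ 2 ∂μ :=
      integral_nonneg_of_ae (hw.mono fun ω hω => mul_nonneg hω (sq_nonneg _))
    rw [hexpand, integral_add _ hwV2, integral_add (hw_int.const_mul _) (hwV.const_mul _),
      integral_const_mul, integral_const_mul] at hnonneg
    · linarith
    · exact (hw_int.const_mul _).add (hwV.const_mul _)
  have := discrim_le_zero hquad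
  unfold discrim at this
  linarith

end WeightedCauchySchwarz

theorem pow_mul_exp_neg_le_factorial {x : ℝ} (hx : 0 ≤ x) (n : ℕ) :
    x ^ n * Real.exp (-x) ≤ n.factorial := by
  have h := Real.pow_div_factorial_le_exp x hx n
  rw [div_le_iff₀ (by positivity)] at h
  rw [Real.exp_neg, mul_inv_le_iff₀ (Real.exp_pos _)]
  linarith

section PoissonMixture

variable {Ω : Type*} [MeasurableSpace Ω] (μ : Measure Ω) {U : Ω → ℝ}

theorem integrable_pow_mul_exp_neg [IsFiniteMeasure μ] (hU : Measurable U)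
    (hU0 : ∀ ω, 0 ≤ U ω) (n : ℕ) :
    Integrable (fun ω => U ω ^ n * Real.exp (-U ω)) μ := by
  refine Integrable.of_bound ((hU.pow_const n).mul hU.neg.exp).aestronglyMeasurable
    n.factorial (ae_of_all _ fun ω => ?_)
  rw [Real.norm_of_nonneg (by have := hU0 ω; positivity)]
  exact pow_mul_exp_neg_le_factorial (hU0 ω) n

theorem sq_integral_pow_succ_mul_exp_neg_le [IsFiniteMeasure μ] (hU : Measurable U)
    (hU0 : ∀ ω, 0 ≤ U ω) (m : ℕ) :
    (∫ ω, U ω ^ (m + 1) * Real.exp (-U ω) ∂μ) ^ 2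
      ≤ (∫ ω, U ω ^ m * Real.exp (-U ω) ∂μ) * ∫ ω, U ω ^ (m + 2) * Real.exp (-U ω) ∂μ := by
  have hshift : ∀ k, (fun ω => U ω ^ m * Real.exp (-U ω) * U ω ^ k)
      = fun ω => U ω ^ (m + k) * Real.exp (-U ω) := fun k => by ext ω; ring
  have hint : ∀ k, Integrable (fun ω => U ω ^ m * Real.exp (-U ω) * U ω ^ k) μ := fun k => by
    rw [hshift]
    exact integrable_pow_mul_exp_neg μ hU hU0 (m + k)
  calc (∫ ω, U ω ^ (m + 1) * Real.exp (-U ω) ∂μ) ^ 2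
      = (∫ ω, U ω ^ m * Real.exp (-U ω) * U ω ∂μ) ^ 2 := by
        congr 2; ext ω; ring
    _ ≤ _ := sq_integral_mul_le_integral_mul_integral_mul_sq
        (ae_of_all _ fun ω => by have := hU0 ω; positivity)
        (integrable_pow_mul_exp_neg μ hU hU0 m) (by simpa only [pow_one] using hint 1) (hint 2)
    _ = _ := by rw [hshift 2]

/-- The law `P(Z = z) = E[U^z e^{-U}] / z!` of `Z` when `Z | U ∼ Poisson(U)`. -/
noncomputable def poissonMixture (U : Ω → ℝ) (z : ℕ) : ℝ :=
  (∫ ω, U ω ^ z * Real.exp (-U ω) ∂μ) / z.factorial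

theorem poissonMixture_sq_le [IsFiniteMeasure μ] (hU : Measurable U) (hU0 : ∀ ω, 0 ≤ U ω)
    {z : ℕ} (hz : z ≠ 0) :
    poissonMixture μ U z ^ 2
      ≤ ((z + 1 : ℝ) / z) * poissonMixture μ U (z + 1) * poissonMixture μ U (z - 1) := by
  obtain ⟨m, rfl⟩ : ∃ m, z = m + 1 := ⟨z - 1, by omega⟩
  simp only [poissonMixture, Nat.add_sub_cancel, div_pow]
  calc (∫ ω, U ω ^ (m + 1) * Real.exp (-U ω) ∂μ) ^ 2 / ((m + 1).factorial : ℝ) ^ 2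
      ≤ (∫ ω, U ω ^ m * Real.exp (-U ω) ∂μ) * (∫ ω, U ω ^ (m + 2) * Real.exp (-U ω) ∂μ)
          / ((m + 1).factorial : ℝ) ^ 2 := by
        gcongr
        exact sq_integral_pow_succ_mul_exp_neg_le μ hU hU0 m
    _ = _ := by
        rw [Nat.factorial_succ (m + 1), Nat.factorial_succ m]
        push_cast
        field_simp

end PoissonMixture

/-- Monotonicity of the conditional mean in the observation for the Poisson channel
`Z | X ∼ Poisson(γX)`. Writing `P(z) = (1/z!)·E[(γX)^z e^{−γX}]` for the marginal and,
via the Turing–Good–Robbins formula, `E[X | Z = z] = (1/γ)·(z+1)·P(z+1)/P(z)`, we have for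
every `z ≥ 1` with `P(z−1) > 0` and `P(z) > 0` both the log-convexity inequality
`P(z)² ≤ ((z+1)/z)·P(z+1)·P(z−1)` (Cauchy–Schwarz applied to `U = γX`) and the
monotonicity `E[X | Z = z−1] ≤ E[X | Z = z]`. -/
theorem stmt_14 {Ω : Type*} [MeasurableSpace Ω] (μ : Measure Ω) [IsProbabilityMeasure μ]
    (X : Ω → ℝ) (hXm : Measurable X) (hXnn : ∀ ω, 0 ≤ X ω) (γ : ℝ) (hγ : 0 < γ)
    (P : ℕ → ℝ)
    (hP : ∀ z : ℕ, P z
        = (∫ ω, (γ * X ω) ^ z * Real.exp (-(γ * X ω)) ∂μ) / (Nat.factorial z))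
    (z : ℕ) (hz : 1 ≤ z) (h0 : 0 < P (z - 1)) (h1 : 0 < P z) :
    P z ^ 2 ≤ ((z + 1 : ℝ) / z) * P (z + 1) * P (z - 1) ∧
    (1 / γ) * ((z : ℝ) * P z / P (z - 1))
      ≤ (1 / γ) * ((z + 1 : ℝ) * P (z + 1) / P z) := by
  have hPU : P = poissonMixture μ (fun ω => γ * X ω) := funext hP
  have hlogconv : P z ^ 2 ≤ ((z + 1 : ℝ) / z) * P (z + 1) * P (z - 1) := by
    rw [hPU]
    exact poissonMixture_sq_le μ (measurable_const.mul hXm)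
      (fun ω => mul_nonneg hγ.le (hXnn ω)) (by omega)
  refine ⟨hlogconv, ?_⟩
  have hzpos : (0 : ℝ) < z := by exact_mod_cast hz
  rw [div_mul_eq_mul_div, div_mul_eq_mul_div, le_div_iff₀ hzpos] at hlogconv
  refine mul_le_mul_of_nonneg_left ?_ (by positivity)
  rw [div_le_div_iff₀ h0 h1]
  linarith
end

section
/- (Digamma-log gap bound) For every integer z ≥ 0, 0 < ψ(z+2) − log(z+1) < 1/(2(z+1)), where ψ is the digamma function. -/
open Real

/-- Key inequality: for `t > 1`, `2 log t < t - 1/t`. -/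
lemma two_log_lt (t : ℝ) (ht : 1 < t) : 2 * Real.log t < t - 1 / t := by
  have ht0 : 0 < t := lt_trans one_pos ht
  have hu : 0 < Real.log t := Real.log_pos ht
  have h := (Real.self_lt_sinh_iff.mpr hu)
  have : Real.sinh (Real.log t) = (t - 1/t) / 2 := by
    rw [Real.sinh_eq, Real.exp_log ht0, ← Real.log_inv, Real.exp_log (by positivity)]
    ring
  rw [this] at h
  linarith

/-- The auxiliary sequence `H_{n+1} - log(n+1) - 1/(2(n+1))`. -/
noncomputable def auxSeq (n : ℕ) : ℝ :=
  (harmonic (n + 1) : ℝ) - Real.log (n + 1) - 1 / (2 * (n + 1))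

lemma auxSeq_strictMono : StrictMono auxSeq := by
  refine strictMono_nat_of_lt_succ fun n => ?_
  have h1 : (0:ℝ) < (n:ℝ) + 1 := by positivity
  have h2 : (0:ℝ) < (n:ℝ) + 2 := by positivity
  have ht : (1:ℝ) < ((n:ℝ) + 2) / ((n:ℝ) + 1) := by
    rw [lt_div_iff₀ h1]; linarith
  have key := two_log_lt _ ht
  rw [Real.log_div h2.ne' h1.ne'] at key
  simp only [auxSeq, harmonic_succ (n + 1)]
  push_cast
  have h3 : ((n:ℝ) + 1 + 1) = (n:ℝ) + 2 := by ring
  rw [h3]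
  have hfield : ((n:ℝ) + 2) / ((n:ℝ) + 1) - 1 / (((n:ℝ) + 2) / ((n:ℝ) + 1))
      = ((n:ℝ)+2)/((n:ℝ)+1) - ((n:ℝ)+1)/((n:ℝ)+2) := by
    rw [one_div_div]
  rw [hfield] at key
  have e1 : ((n:ℝ)+2)/((n:ℝ)+1) - ((n:ℝ)+1)/((n:ℝ)+2)
      = (2*(n:ℝ)+3)/(((n:ℝ)+1)*((n:ℝ)+2)) := by
    field_simp; ring
  rw [e1] at key
  have e2 : (1:ℝ)/((n:ℝ)+2) - 1/(2*((n:ℝ)+2)) + 1/(2*((n:ℝ)+1))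
      = (2*(n:ℝ)+3)/(2*(((n:ℝ)+1)*((n:ℝ)+2))) := by
    field_simp; ring
  have e3 : (2*(n:ℝ)+3)/(((n:ℝ)+1)*((n:ℝ)+2))
      = 2 * ((2*(n:ℝ)+3)/(2*(((n:ℝ)+1)*((n:ℝ)+2)))) := by
    field_simp
  have hinv : ((n:ℝ)+2)⁻¹ = 1/((n:ℝ)+2) := (one_div _).symm
  linarith [key, e2, e3.symm.le, hinv]

lemma auxSeq_tendsto :
    Filter.Tendsto auxSeq Filter.atTop (nhds Real.eulerMascheroniConstant) := by
  have h1 : Filter.Tendsto (fun n : ℕ => Real.eulerMascheroniSeq' (n + 1))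
      Filter.atTop (nhds Real.eulerMascheroniConstant) :=
    Real.tendsto_eulerMascheroniSeq'.comp (Filter.tendsto_add_atTop_nat 1)
  have h2 : Filter.Tendsto (fun n : ℕ => 1 / (2 * ((n:ℝ) + 1)))
      Filter.atTop (nhds 0) := by
    apply squeeze_zero (fun n => by positivity)
      (g := fun n : ℕ => 1 / ((n:ℝ) + 1)) (fun n =>
        one_div_le_one_div_of_le (by positivity)
          (by nlinarith [Nat.cast_nonneg (α := ℝ) n]))
    exact tendsto_one_div_add_atTop_nhds_zero_nat
  have := h1.sub h2
  rw [sub_zero] at this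
  refine this.congr fun n => ?_
  simp only [Real.eulerMascheroniSeq', Nat.succ_ne_zero, if_false, auxSeq]
  push_cast
  ring

lemma auxSeq_lt (n : ℕ) : auxSeq n < Real.eulerMascheroniConstant :=
  (auxSeq_strictMono (Nat.lt_succ_self n)).trans_le
    (auxSeq_strictMono.monotone.ge_of_tendsto auxSeq_tendsto _)

/-- The digamma function at integer arguments: `digammaNat n = ψ(n+1) = H_n − γ_E`,
where `H_n` is the `n`-th harmonic number and `γ_E` the Euler–Mascheroni constant. -/
noncomputable def digammaNat (n : ℕ) : ℝ := (harmonic n : ℝ) - Real.eulerMascheroniConstant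

/-- Digamma-log gap bound: for every integer `z ≥ 0`,
`0 < ψ(z+2) − log(z+1) < 1/(2(z+1))`. -/
theorem stmt_18 (z : ℕ) :
    0 < digammaNat (z + 1) - Real.log (z + 1) ∧
    digammaNat (z + 1) - Real.log (z + 1) < 1 / (2 * (z + 1)) := by
  constructor
  · have h := Real.eulerMascheroniConstant_lt_eulerMascheroniSeq' (z + 1)
    simp only [Real.eulerMascheroniSeq', Nat.succ_ne_zero, if_false] at h
    simp only [digammaNat]
    push_cast at h
    linarith
  · have h := auxSeq_lt z
    simp only [auxSeq, digammaNat] at h ⊢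
    push_cast at h
    linarith
end
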